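/- (C2, first approximation) If 0 < y < x, then there exists θ with 1 < θ < 4 such that R_C(x,y) = (1/(2√x))·( ln(4x/y) + (y/(2x−y))·ln(θx/y) ). -/

import Mathlib

open MeasureTheory Real


noncomputable def RC (x y : ℝ) : ℝ :=
  (1/2) * ∫ t in Set.Ioi (0:ℝ), (t+x) ^ (-(1/2) : ℝ) * (t+y)⁻¹

namespace RCaux
set_option linter.dupNamespace false

open Set Filter

noncomputable def Gf (u : ℝ) : ℝ :=
  (1+u)^2 * Real.log (1+u) - (1-u)^2 * Real.log (1-u) - u*(1+u^2) * Real.log 4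

lemma log_four : Real.log 4 = 2 * Real.log 2 := by
  rw [show (4:ℝ) = 2^2 by norm_num, Real.log_pow]; norm_num

lemma Gf_zero : Gf 0 = 0 := by simp [Gf]

lemma Gf_one : Gf 1 = 0 := by
  have h : (1:ℝ) - 1 = 0 := by norm_num
  simp [Gf, h, log_four]
  rw [show (1:ℝ)+1 = 2 by norm_num]
  ring

lemma Gf_eq_negMulLog : Gf = fun u =>
    (1+u)^2 * Real.log (1+u) + (1-u) * Real.negMulLog (1-u) - u*(1+u^2) * Real.log 4 := by
  funext u; simp [Gf, Real.negMulLog]; ring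

lemma Gf_contOn {s : Set ℝ} (hs : ∀ u ∈ s, 0 < 1 + u) : ContinuousOn Gf s := by
  rw [Gf_eq_negMulLog]
  refine ContinuousOn.sub (ContinuousOn.add ?_ ?_) (by fun_prop)
  · exact (((continuous_const.add continuous_id).pow 2).continuousOn).mul
      (ContinuousOn.log (by fun_prop) (fun u hu => (hs u hu).ne'))
  · exact ((continuous_const.sub continuous_id).mul
      (Real.continuous_negMulLog.comp (continuous_const.sub continuous_id))).continuousOn

lemma Gf_num : 0 < Gf (23/25) := by
  have hp : (2:ℝ)^15 < (48/25:ℝ)^16 := by norm_num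
  have hl : Real.log ((2:ℝ)^15) < Real.log ((48/25:ℝ)^16) :=
    Real.log_lt_log (by positivity) hp
  rw [Real.log_pow, Real.log_pow] at hl
  push_cast at hl
  have hl008 : Real.log (2/25) < 0 := Real.log_neg (by norm_num) (by norm_num)
  have l2 : 0 < Real.log 2 := Real.log_pos one_lt_two
  have e1 : (1:ℝ) + 23/25 = 48/25 := by norm_num
  have e2 : (1:ℝ) - 23/25 = 2/25 := by norm_num
  rw [Gf, e1, e2, log_four]
  nlinarith [hl, hl008, l2]


noncomputable def Gf1 (u : ℝ) : ℝ :=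
  2*(1+u)*Real.log (1+u) + 2*(1-u)*Real.log (1-u) + 2 - (1+3*u^2)*Real.log 4

lemma Gf_hasDeriv {u : ℝ} (h1 : -1 < u) (h2 : u < 1) : HasDerivAt Gf (Gf1 u) u := by
  have h1u : (0:ℝ) < 1 + u := by linarith
  have h2u : (0:ℝ) < 1 - u := by linarith
  have d1 : HasDerivAt (fun v : ℝ => 1 + v) 1 u := by
    simpa using (hasDerivAt_id u).const_add (1:ℝ)
  have d2 : HasDerivAt (fun v : ℝ => 1 - v) (-1) u := by
    simpa using (hasDerivAt_id u).const_sub (1:ℝ)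
  have dA : HasDerivAt (fun v : ℝ => Real.log (1+v)) (1/(1+u)) u := by
    simpa using d1.log h1u.ne'
  have dB : HasDerivAt (fun v : ℝ => Real.log (1-v)) (-1/(1-u)) u := by
    simpa using d2.log h2u.ne'
  have t1 := ((d1.pow 2).mul dA)
  have t2 := ((d2.pow 2).mul dB)
  have t3 : HasDerivAt (fun v : ℝ => v*(1+v^2)*Real.log 4)
      ((1*(1+u^2) + u*(2*u))*Real.log 4) u := by
    have := ((hasDerivAt_id u).mul (((hasDerivAt_id u).pow 2).const_add (1:ℝ))).mul_const
      (Real.log 4)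
    simpa using this
  have := (t1.sub t2).sub t3
  refine this.congr_deriv ?_
  simp only [Pi.pow_apply]
  unfold Gf1
  field_simp
  ring

lemma Gf1_hasDeriv {u : ℝ} (h1 : -1 < u) (h2 : u < 1) :
    HasDerivAt Gf1 (2*Real.log (1+u) - 2*Real.log (1-u) - 6*u*Real.log 4) u := by
  have h1u : (0:ℝ) < 1 + u := by linarith
  have h2u : (0:ℝ) < 1 - u := by linarith
  have d1 : HasDerivAt (fun v : ℝ => 1 + v) 1 u := by
    simpa using (hasDerivAt_id u).const_add (1:ℝ)
  have d2 : HasDerivAt (fun v : ℝ => 1 - v) (-1) u := by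
    simpa using (hasDerivAt_id u).const_sub (1:ℝ)
  have dA : HasDerivAt (fun v : ℝ => Real.log (1+v)) (1/(1+u)) u := by
    simpa using d1.log h1u.ne'
  have dB : HasDerivAt (fun v : ℝ => Real.log (1-v)) (-1/(1-u)) u := by
    simpa using d2.log h2u.ne'
  have t1 := (d1.const_mul (2:ℝ)).mul dA
  have t2 := (d2.const_mul (2:ℝ)).mul dB
  have t3 : HasDerivAt (fun v : ℝ => 2 - (1+3*v^2)*Real.log 4) (-(6*u*Real.log 4)) u := by
    have h := ((((hasDerivAt_id u).pow 2).const_mul (3:ℝ)).const_add (1:ℝ)).mul_const (Real.log 4)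
    have h2 := h.const_sub (2:ℝ)
    have he : -(6*u*Real.log 4) = -(3 * (↑(2:ℕ) * id u ^ (2 - 1) * 1) * Real.log 4) := by
      norm_num
      ring
    rw [he]
    exact h2
  have total := (t1.add t2).add t3
  have hfun : Gf1 = (fun y => (2*(1+y)*Real.log (1+y) + 2*(1-y)*Real.log (1-y)) +
      (2 - (1+3*y^2)*Real.log 4)) := by
    funext y; unfold Gf1; ring
  rw [hfun]
  refine total.congr_deriv ?_
  field_simp
  ring



-- auxiliary concave function h(u) = 3u log 4 - log(1+u) + log(1-u)
lemma h_pos : ∀ u ∈ Ioo (0:ℝ) (23/25),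
    0 < 3*u*Real.log 4 - Real.log (1+u) + Real.log (1-u) := by
  set h : ℝ → ℝ := fun v => 3*v*Real.log 4 - Real.log (1+v) + Real.log (1-v) with hh
  have hder : ∀ v ∈ Ioo (-1:ℝ) 1,
      HasDerivAt h (3*Real.log 4 - 1/(1+v) - 1/(1-v)) v := by
    intro v hv
    have h1u : (0:ℝ) < 1 + v := by linarith [hv.1]
    have h2u : (0:ℝ) < 1 - v := by linarith [hv.2]
    have d1 : HasDerivAt (fun w : ℝ => 1 + w) 1 v := by
      simpa using (hasDerivAt_id v).const_add (1:ℝ)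
    have d2 : HasDerivAt (fun w : ℝ => 1 - w) (-1) v := by
      simpa using (hasDerivAt_id v).const_sub (1:ℝ)
    have dA := d1.log h1u.ne'
    have dB := d2.log h2u.ne'
    have t1 : HasDerivAt (fun w : ℝ => 3*w*Real.log 4) (3*Real.log 4) v := by
      have := (hasDerivAt_id v).const_mul (3:ℝ)
      have := this.mul_const (Real.log 4)
      refine this.congr_deriv ?_; ring
    have total := (t1.sub dA).add dB
    refine total.congr_deriv ?_
    field_simp
    ring
  have hder2 : ∀ v ∈ Ioo (-1:ℝ) 1,
      HasDerivAt (fun w : ℝ => 3*Real.log 4 - 1/(1+w) - 1/(1-w))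
        (1/(1+v)^2 - 1/(1-v)^2) v := by
    intro v hv
    have h1u : (0:ℝ) < 1 + v := by linarith [hv.1]
    have h2u : (0:ℝ) < 1 - v := by linarith [hv.2]
    have d1 : HasDerivAt (fun w : ℝ => 1 + w) 1 v := by
      simpa using (hasDerivAt_id v).const_add (1:ℝ)
    have d2 : HasDerivAt (fun w : ℝ => 1 - w) (-1) v := by
      simpa using (hasDerivAt_id v).const_sub (1:ℝ)
    have i1 := d1.inv h1u.ne'
    have i2 := d2.inv h2u.ne'
    have t1 : HasDerivAt (fun w : ℝ => (1:ℝ)/(1+w)) (-(1/(1+v)^2)) v := by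
      have := i1; simp only [one_div]; refine this.congr_deriv ?_; field_simp
    have t2 : HasDerivAt (fun w : ℝ => (1:ℝ)/(1-w)) (1/(1-v)^2) v := by
      have := i2; simp only [one_div]; refine this.congr_deriv ?_; field_simp
    have total := ((hasDerivAt_const v (3*Real.log 4)).sub t1).sub t2
    refine total.congr_deriv ?_
    ring
  have hconc : StrictConcaveOn ℝ (Icc (0:ℝ) (23/25)) h := by
    apply strictConcaveOn_of_deriv2_neg (convex_Icc 0 (23/25))
    · apply ContinuousOn.add
      apply ContinuousOn.sub
      · fun_prop
      · exact ContinuousOn.log (by fun_prop) (fun u hu => by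
          have := hu.1; dsimp at this ⊢; intro hc; nlinarith)
      · exact ContinuousOn.log (by fun_prop) (fun u hu => by
          have h2 := hu.2; dsimp at h2 ⊢; intro hc; nlinarith)
    · intro x hx
      rw [interior_Icc] at hx
      have hm1 : (-1:ℝ) < x := by linarith [hx.1]
      have hlt1 : x < 1 := by nlinarith [hx.2]
      have hev : deriv h =ᶠ[nhds x] (fun w => 3*Real.log 4 - 1/(1+w) - 1/(1-w)) :=
        Filter.eventually_of_mem (Ioo_mem_nhds hm1 hlt1)
          (fun v hv => (hder v hv).deriv)
      have hd2 : deriv (deriv h) x = 1/(1+x)^2 - 1/(1-x)^2 := by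
        rw [hev.deriv_eq]; exact (hder2 x ⟨hm1, hlt1⟩).deriv
      simp only [Function.iterate_succ, Function.iterate_zero, Function.comp, id_eq]
      rw [hd2]
      have h1u : (0:ℝ) < 1 + x := by linarith
      have h2u : (0:ℝ) < 1 - x := by linarith [hx.1]
      have : (1-x)^2 < (1+x)^2 := by nlinarith [hx.1]
      have := one_div_lt_one_div_of_lt (by positivity) this
      linarith
  have h0 : h 0 = 0 := by simp [hh]
  have hb : 0 < h (23/25) := by
    have e1 : (1:ℝ) + 23/25 = 48/25 := by norm_num
    have e2 : (1:ℝ) - 23/25 = 2/25 := by norm_num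
    have l4 : Real.log 4 = 2*Real.log 2 := by
      rw [show (4:ℝ) = 2^2 by norm_num, Real.log_pow]; norm_num
    have e24 : Real.log (48/25) - Real.log (2/25) = Real.log 24 := by
      rw [← Real.log_div (by norm_num) (by norm_num)]; norm_num
    have h24 : 2*Real.log 24 < 11*Real.log 2 := by
      have hp : ((24:ℝ)^2) < 2^11 := by norm_num
      have := Real.log_lt_log (by positivity) hp
      rw [Real.log_pow, Real.log_pow] at this
      push_cast at this
      linarith
    have l2 : 0 < Real.log 2 := Real.log_pos one_lt_two
    simp only [hh, e1, e2, l4]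
    linarith
  intro u hu
  have ha : (0:ℝ) < 1 - u/(23/25) := by
    have := hu.2; rw [sub_pos, div_lt_one (by norm_num)]; exact this
  have hbpos : 0 < u/(23/25) := div_pos hu.1 (by norm_num)
  have hsum : (1 - u/(23/25)) + u/(23/25) = 1 := by ring
  have hmem0 : (0:ℝ) ∈ Icc (0:ℝ) (23/25) := by constructor <;> norm_num
  have hmemb : (23/25:ℝ) ∈ Icc (0:ℝ) (23/25) := by constructor <;> norm_num
  have hne : (0:ℝ) ≠ 23/25 := by norm_num
  have := hconc.2 hmem0 hmemb hne ha hbpos hsum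
  simp only [smul_eq_mul, mul_zero, h0, zero_add, mul_one] at this
  rw [show u/(23/25) * (23/25:ℝ) = u by field_simp] at this
  have : 0 < h u := (mul_pos hbpos hb).trans this
  simpa [hh] using this



lemma Gf1_neg {x : ℝ} (h1 : 23/25 < x) (h2 : x < 1) : Gf1 x < 0 := by
  have hA0 : 0 < Real.log (1+x) := Real.log_pos (by linarith)
  have hA1 : Real.log (1+x) < Real.log 2 := Real.log_lt_log (by linarith) (by linarith)
  have hB : Real.log (1-x) < 0 := Real.log_neg (by linarith) (by linarith)
  have l2 : (0.6931471803:ℝ) < Real.log 2 := Real.log_two_gt_d9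
  have t1 : 2*(1+x)*Real.log (1+x) < 4*Real.log 2 := by nlinarith
  have t2 : 2*(1-x)*Real.log (1-x) < 0 := by nlinarith
  have hx2 : (529/625:ℝ) < x^2 := by nlinarith
  have t3 : (2212/625:ℝ)*(2*Real.log 2) < (1+3*x^2)*(2*Real.log 2) := by
    nlinarith [hx2, Real.log_pos (show (1:ℝ) < 2 by norm_num)]
  unfold Gf1
  rw [log_four]
  nlinarith [t1, t2, t3, l2]

lemma Gf_lt : ∀ u ∈ Ioo (0:ℝ) 1, Gf u < u*(1-u^2)*Real.log 4 := by
  set f : ℝ → ℝ := fun v => v*(1-v^2)*Real.log 4 - Gf v with hf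
  have fder : ∀ v ∈ Ioo (-1:ℝ) 1, HasDerivAt f ((1-3*v^2)*Real.log 4 - Gf1 v) v := by
    intro v hv
    have t : HasDerivAt (fun w : ℝ => w*(1-w^2)*Real.log 4) ((1-3*v^2)*Real.log 4) v := by
      have := ((hasDerivAt_id v).mul (((hasDerivAt_id v).pow 2).const_sub (1:ℝ))).mul_const
        (Real.log 4)
      refine this.congr_deriv ?_
      norm_num; ring
    exact t.sub (Gf_hasDeriv hv.1 hv.2)
  have fder2 : ∀ v ∈ Ioo (-1:ℝ) 1,
      HasDerivAt (fun w : ℝ => (1-3*w^2)*Real.log 4 - Gf1 w)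
        (2*Real.log (1-v) - 2*Real.log (1+v)) v := by
    intro v hv
    have t : HasDerivAt (fun w : ℝ => (1-3*w^2)*Real.log 4) (-(6*v)*Real.log 4) v := by
      have := ((((hasDerivAt_id v).pow 2).const_mul (3:ℝ)).const_sub (1:ℝ)).mul_const
        (Real.log 4)
      refine this.congr_deriv ?_
      norm_num; ring
    have := t.sub (Gf1_hasDeriv hv.1 hv.2)
    refine this.congr_deriv ?_
    ring
  have hconc : StrictConcaveOn ℝ (Icc (0:ℝ) 1) f := by
    apply strictConcaveOn_of_deriv2_neg (convex_Icc 0 1)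
    · exact ContinuousOn.sub (by fun_prop)
        (Gf_contOn (fun u hu => by linarith [hu.1]))
    · intro x hx
      rw [interior_Icc] at hx
      have hm1 : (-1:ℝ) < x := by linarith [hx.1]
      have hev : deriv f =ᶠ[nhds x] (fun w => (1-3*w^2)*Real.log 4 - Gf1 w) :=
        Filter.eventually_of_mem (Ioo_mem_nhds hm1 hx.2) (fun v hv => (fder v hv).deriv)
      have hd2 : deriv (deriv f) x = 2*Real.log (1-x) - 2*Real.log (1+x) := by
        rw [hev.deriv_eq]; exact (fder2 x ⟨hm1, hx.2⟩).deriv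
      simp only [Function.iterate_succ, Function.iterate_zero, Function.comp, id_eq]
      rw [hd2]
      have : Real.log (1-x) < Real.log (1+x) :=
        Real.log_lt_log (by linarith [hx.2]) (by linarith [hx.1])
      linarith
  have h0 : f 0 = 0 := by simp [hf, Gf_zero]
  have h1 : f 1 = 0 := by simp [hf, Gf_one]
  intro u hu
  have ha : (0:ℝ) < 1 - u := by linarith [hu.2]
  have hb : (0:ℝ) < u := hu.1
  have := hconc.2 (left_mem_Icc.2 (by norm_num)) (right_mem_Icc.2 (by norm_num))
    (by norm_num : (0:ℝ) ≠ 1) ha hb (by ring)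
  simp only [smul_eq_mul, mul_zero, mul_one, h0, h1, zero_add] at this
  have h2 : 0 < f u := by simpa using this
  simp only [hf] at h2
  linarith

lemma Gf_pos : ∀ u ∈ Ioo (0:ℝ) 1, 0 < Gf u := by
  have hconcG : StrictConcaveOn ℝ (Icc (0:ℝ) (23/25)) Gf := by
    apply strictConcaveOn_of_deriv2_neg (convex_Icc 0 (23/25))
    · exact Gf_contOn (fun u hu => by linarith [hu.1])
    · intro x hx
      rw [interior_Icc] at hx
      have hm1 : (-1:ℝ) < x := by linarith [hx.1]
      have hlt1 : x < 1 := by nlinarith [hx.2]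
      have hev : deriv Gf =ᶠ[nhds x] Gf1 :=
        Filter.eventually_of_mem (Ioo_mem_nhds hm1 hlt1)
          (fun v hv => (Gf_hasDeriv hv.1 hv.2).deriv)
      have hd2 : deriv (deriv Gf) x =
          2*Real.log (1+x) - 2*Real.log (1-x) - 6*x*Real.log 4 := by
        rw [hev.deriv_eq]; exact (Gf1_hasDeriv hm1 hlt1).deriv
      simp only [Function.iterate_succ, Function.iterate_zero, Function.comp, id_eq]
      rw [hd2]
      have := h_pos x hx
      linarith
  intro u hu
  rcases lt_trichotomy u (23/25) with hlt | heq | hgt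
  · have ha : (0:ℝ) < 1 - u/(23/25) := by
      rw [sub_pos, div_lt_one (by norm_num)]; exact hlt
    have hb : 0 < u/(23/25) := div_pos hu.1 (by norm_num)
    have := hconcG.2 (left_mem_Icc.2 (by norm_num)) (right_mem_Icc.2 (by norm_num))
      (by norm_num : (0:ℝ) ≠ 23/25) ha hb (by ring)
    simp only [smul_eq_mul, mul_zero, Gf_zero, zero_add] at this
    rw [show u/(23/25) * (23/25:ℝ) = u by field_simp] at this
    exact (mul_pos hb Gf_num).trans this
  · rw [heq]; exact Gf_num
  · have hanti : StrictAntiOn Gf (Icc (23/25:ℝ) 1) := by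
      apply strictAntiOn_of_deriv_neg (convex_Icc _ _)
      · exact Gf_contOn (fun u hu => by linarith [hu.1])
      · intro x hx
        rw [interior_Icc] at hx
        rw [(Gf_hasDeriv (by linarith [hx.1] : (-1:ℝ) < x) hx.2).deriv]
        exact Gf1_neg hx.1 hx.2
    have := hanti ⟨hgt.le, hu.2.le⟩ ⟨by norm_num, le_rfl⟩ hu.2
    rw [Gf_one] at this
    exact this



lemma RC_closed {x y : ℝ} (hy : 0 < y) (hyx : y < x) :
    RC x y = (Real.log (Real.sqrt x + Real.sqrt (x-y)) -
      Real.log (Real.sqrt x - Real.sqrt (x-y))) / (2 * Real.sqrt (x-y)) := by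
  have hx : 0 < x := hy.trans hyx
  set c := Real.sqrt (x-y) with hc_def
  have hxy : (0:ℝ) < x - y := by linarith
  have hc : 0 < c := Real.sqrt_pos.2 hxy
  have hcx : c < Real.sqrt x := Real.sqrt_lt_sqrt hxy.le (by linarith)
  set F : ℝ → ℝ := fun t =>
    (Real.log (Real.sqrt (t+x) - c) - Real.log (Real.sqrt (t+x) + c)) / c with hF_def
  have hcc : c*c = x - y := Real.mul_self_sqrt hxy.le
  -- derivative on Ici 0
  have hderiv : ∀ t ∈ Ici (0:ℝ), HasDerivAt F ((t+x) ^ (-(1/2) : ℝ) * (t+y)⁻¹) t := by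
    intro t ht
    have ht0 : (0:ℝ) ≤ t := ht
    have hpos : 0 < t + x := by linarith
    set s := Real.sqrt (t+x) with hs_def
    have hs0 : 0 < s := Real.sqrt_pos.2 hpos
    have hsc : c < s := by
      have : Real.sqrt x ≤ s := Real.sqrt_le_sqrt (by linarith)
      linarith
    have hss : s*s = t + x := Real.mul_self_sqrt hpos.le
    have d0 : HasDerivAt (fun t : ℝ => t + x) 1 t := (hasDerivAt_id t).add_const x
    have dsq : HasDerivAt (fun t : ℝ => Real.sqrt (t+x)) (1/(2*s)) t := by
      have := (Real.hasDerivAt_sqrt hpos.ne').comp t d0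
      refine this.congr_deriv ?_; simp [hs_def]
    have dP : HasDerivAt (fun t : ℝ => Real.log (Real.sqrt (t+x) - c))
        ((1/(2*s))/(s - c)) t := (dsq.sub_const c).log (sub_pos.2 hsc).ne' 
    have dQ : HasDerivAt (fun t : ℝ => Real.log (Real.sqrt (t+x) + c))
        ((1/(2*s))/(s + c)) t := (dsq.add_const c).log (by positivity)
    have dF := (dP.sub dQ).div_const c
    refine dF.congr_deriv ?_
    have hrw : (t+x) ^ (-(1/2) : ℝ) = s⁻¹ := by
      rw [Real.rpow_neg hpos.le, ← Real.sqrt_eq_rpow]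
    have hty : t + y = (s - c)*(s + c) := by nlinarith [hss, hcc]
    rw [hrw, hty]
    have h1 : s - c ≠ 0 := (sub_pos.2 hsc).ne' 
    have h2 : s + c ≠ 0 := by positivity
    field_simp
    ring
  -- limit at infinity
  have hsqrt : Tendsto Real.sqrt atTop atTop := by
    apply (tendsto_rpow_atTop (by norm_num : (0:ℝ) < 1/2)).congr'
    filter_upwards [eventually_ge_atTop (0:ℝ)] with v hv
    exact (Real.sqrt_eq_rpow v).symm
  have hs : Tendsto (fun t : ℝ => Real.sqrt (t+x)) atTop atTop :=
    hsqrt.comp (tendsto_atTop_add_const_right atTop x tendsto_id)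
  have hq : Tendsto (fun s : ℝ => Real.log ((s - c)/(s + c)) / c) atTop (nhds 0) := by
    have h0 : Tendsto (fun s : ℝ => 2*c/(s+c)) atTop (nhds 0) :=
      Tendsto.div_atTop tendsto_const_nhds (tendsto_atTop_add_const_right atTop c tendsto_id)
    have h1 : Tendsto (fun s : ℝ => 1 - 2*c/(s+c)) atTop (nhds 1) := by
      simpa using tendsto_const_nhds.sub h0
    have h2 : Tendsto (fun s : ℝ => (s - c)/(s + c)) atTop (nhds 1) := by
      apply h1.congr'
      filter_upwards [eventually_gt_atTop c] with s hs
      have hsc : (0:ℝ) < s + c := by linarith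
      field_simp
      ring
    have h3 : Tendsto (fun s : ℝ => Real.log ((s - c)/(s + c))) atTop (nhds 0) := by
      have := (Real.continuousAt_log one_ne_zero).tendsto.comp h2
      simpa [Function.comp_def] using this
    simpa using h3.div_const c
  have hFlim : Tendsto F atTop (nhds 0) := by
    apply (hq.comp hs).congr'
    filter_upwards [eventually_ge_atTop (0:ℝ)] with t ht
    have hpos : 0 < t + x := by linarith
    have hsc : c < Real.sqrt (t+x) := by
      have : Real.sqrt x ≤ Real.sqrt (t+x) := Real.sqrt_le_sqrt (by linarith)
      linarith
    simp only [Function.comp_apply, hF_def]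
    rw [Real.log_div (sub_pos.2 hsc).ne' (by positivity)]
  -- nonnegativity
  have hnn : ∀ t ∈ Ioi (0:ℝ), 0 ≤ (t+x) ^ (-(1/2) : ℝ) * (t+y)⁻¹ := by
    intro t ht
    have ht0 : (0:ℝ) < t := ht
    exact mul_nonneg (Real.rpow_nonneg (by linarith) _) (inv_nonneg.2 (by linarith))
  have hint := integral_Ioi_of_hasDerivAt_of_nonneg' hderiv hnn hFlim
  rw [RC, hint]
  have h0x : (0:ℝ) + x = x := zero_add x
  simp only [hF_def, h0x]
  field_simp
  ring

end RCaux

open RCaux in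
set_option maxHeartbeats 1000000 in
/-- (C2), first approximation. -/
theorem RC_asymp_y_lt_x (x y : ℝ) (hy : 0 < y) (hyx : y < x) :
    ∃ θ : ℝ, 1 < θ ∧ θ < 4 ∧
      RC x y = (1 / (2 * Real.sqrt x)) *
        (Real.log (4 * x / y) + (y / (2 * x - y)) * Real.log (θ * x / y)) := by
  have hx : 0 < x := hy.trans hyx
  have hxy : 0 < x - y := by linarith
  set a := Real.sqrt x with ha_def
  set c := Real.sqrt (x-y) with hc_def
  have ha : 0 < a := Real.sqrt_pos.2 hx
  have hc : 0 < c := Real.sqrt_pos.2 hxy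
  have hca : c < a := Real.sqrt_lt_sqrt hxy.le (by linarith)
  have ha2 : a^2 = x := Real.sq_sqrt hx.le
  have hc2 : c^2 = x - y := Real.sq_sqrt hxy.le
  have hRC : RC x y = (Real.log (a+c) - Real.log (a-c)) / (2*c) := RC_closed hy hyx
  obtain ⟨u, hu_def⟩ : ∃ u : ℝ, u = c/a := ⟨c/a, rfl⟩
  have hu0 : 0 < u := by rw [hu_def]; exact div_pos hc ha
  have hu1 : u < 1 := by rw [hu_def]; exact (div_lt_one ha).2 hca
  have hcu : c = u*a := by rw [hu_def]; field_simp
  have hyau : y = a^2*(1-u^2) := by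
    have h := hc2
    rw [hcu] at h
    nlinarith [ha2, h]
  have h1u : (0:ℝ) < 1 + u := by linarith
  have h2u : (0:ℝ) < 1 - u := by linarith
  have hy2 : 0 < a^2*(1-u^2) := by rw [← hyau]; exact hy
  have hA : Real.log (a+c) = Real.log a + Real.log (1+u) := by
    rw [hcu, show a + u*a = a*(1+u) by ring, Real.log_mul ha.ne' h1u.ne']
  have hB : Real.log (a-c) = Real.log a + Real.log (1-u) := by
    rw [hcu, show a - u*a = a*(1-u) by ring, Real.log_mul ha.ne' h2u.ne']
  have hL : Real.log (4*x/y) = Real.log 4 - Real.log (1+u) - Real.log (1-u) := by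
    rw [show 4*x/y = 4/((1+u)*(1-u)) by
        rw [← ha2, hyau, div_eq_div_iff hy2.ne' (by positivity)]; ring,
      Real.log_div (by norm_num) (by positivity), Real.log_mul h1u.ne' h2u.ne']
    ring
  have hXY : Real.log (x/y) = -(Real.log (1+u) + Real.log (1-u)) := by
    rw [show x/y = 1/((1+u)*(1-u)) by
        rw [← ha2, hyau, div_eq_div_iff hy2.ne' (by positivity)]; ring,
      Real.log_div one_ne_zero (by positivity), Real.log_mul h1u.ne' h2u.ne']
    simp
  have hRCu : 2*a*RC x y * u = Real.log (1+u) - Real.log (1-u) := by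
    rw [hRC, hA, hB, hcu]
    field_simp
    ring
  have hGpos := Gf_pos u ⟨hu0, hu1⟩
  have hGlt := Gf_lt u ⟨hu0, hu1⟩
  unfold Gf at hGpos hGlt
  have h2xy : 0 < 2*x - y := by linarith
  obtain ⟨E, hE_def⟩ : ∃ E : ℝ, E = ((2*x - y)/y) * (2*a*RC x y - Real.log (4*x/y)) :=
    ⟨_, rfl⟩
  have expand : (2*x-y) * (2*a*RC x y - Real.log (4*x/y)) * u
      = (2*x-y) * ((Real.log (1+u) - Real.log (1-u)) - Real.log (4*x/y) * u) := by
    rw [← hRCu]; ring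
  refine ⟨(y/x) * Real.exp E, ?_, ?_, ?_⟩
  · have hEgt : Real.log (x/y) < E := by
      rw [hE_def, div_mul_eq_mul_div, lt_div_iff₀ hy, ← mul_lt_mul_iff_left₀ hu0, expand,
        hXY, hL, hyau, show x = a^2 from ha2.symm]
      nlinarith [mul_pos (mul_pos ha ha) hGpos]
    have hxypos : 0 < x/y := by positivity
    have hlt : x/y < Real.exp E := by
      rw [← Real.exp_log hxypos]; exact Real.exp_lt_exp.2 hEgt
    have hyx0 : 0 < y/x := by positivity
    calc (1:ℝ) = (y/x)*(x/y) := by field_simp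
    _ < (y/x)*Real.exp E := (mul_lt_mul_iff_right₀ hyx0).2 hlt
  · have hElt : E < Real.log (4*x/y) := by
      rw [hE_def, div_mul_eq_mul_div, div_lt_iff₀ hy, ← mul_lt_mul_iff_left₀ hu0, expand,
        hL, hyau, show x = a^2 from ha2.symm]
      nlinarith [mul_pos (mul_pos ha ha) (sub_pos.2 hGlt)]
    have h4pos : 0 < 4*x/y := by positivity
    have hlt : Real.exp E < 4*x/y := by
      rw [← Real.exp_log h4pos]; exact Real.exp_lt_exp.2 hElt
    calc (y/x)*Real.exp E < (y/x)*(4*x/y) := (mul_lt_mul_iff_right₀ (by positivity)).2 hlt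
    _ = 4 := by field_simp
  · rw [show (y/x*Real.exp E)*x/y = Real.exp E by field_simp, Real.log_exp, hE_def]
    field_simp
    ring
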